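/- arXiv:1905.10682 — 7 statements merged into one kernel-verified Lean document; each statement's English description precedes it below -/
import Mathlib

section
/- Let H be a finite simple graph, p a prime, π an automorphism of H of order p, and H^π the subgraph of H induced by the fixed points of π. Then for every graph G, |Hom(G,H)| ≡ |Hom(G,H^π)| (mod p). -/
/-!
The cyclic group generated by `π` has order `p` and acts on `Hom(G, H)` by postcomposition.
A homomorphism is fixed by this action exactly when it lands in the fixed-point set of `π`,
i.e. when it is a homomorphism into `H^π`; and for a `p`-group acting on a finite set, the
number of points is congruent mod `p` to the number of fixed points (the other orbits have size
divisible by `p`).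
-/

open MulAction Subgroup

theorem MulAction.mem_fixedPoints_zpowers_iff {G α : Type*} [Group G] [MulAction G α]
    {g : G} {a : α} : a ∈ fixedPoints (zpowers g) α ↔ g • a = a :=
  ⟨fun h => h ⟨g, mem_zpowers g⟩, fun h ⟨_, k, hk⟩ => hk ▸ mem_fixedBy_zpow h k⟩

namespace SimpleGraph

variable {V W : Type*} {G : SimpleGraph V} {H : SimpleGraph W}

def Iso.toPermHom : (H ≃g H) →* Equiv.Perm W where
  toFun σ := σ.toEquiv
  map_one' := rfl
  map_mul' _ _ := rfl

theorem Iso.toPermHom_injective : Function.Injective (Iso.toPermHom (H := H)) :=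
  RelIso.toEquiv_injective

theorem Iso.orderOf_mk (π : Equiv.Perm W) (hπ : ∀ {a b}, H.Adj (π a) (π b) ↔ H.Adj a b) :
    orderOf (⟨π, hπ⟩ : H ≃g H) = orderOf π :=
  (orderOf_injective Iso.toPermHom Iso.toPermHom_injective ⟨π, hπ⟩).symm

instance Iso.mulActionHom : MulAction (H ≃g H) (G →g H) where
  smul σ f := σ.toHom.comp f
  one_smul _ := rfl
  mul_smul _ _ _ := rfl

@[simp]
theorem Iso.smul_hom_apply (σ : H ≃g H) (f : G →g H) (x : V) : (σ • f) x = σ (f x) := rfl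

theorem Iso.smul_hom_eq_self_iff {σ : H ≃g H} {f : G →g H} :
    σ • f = f ↔ ∀ x, σ (f x) = f x := by
  simp only [RelHom.ext_iff, Iso.smul_hom_apply]

def Hom.equivInduceOfMapsTo (s : Set W) : {f : G →g H // ∀ x, f x ∈ s} ≃ (G →g H.induce s) where
  toFun f := ⟨fun x => ⟨f.1 x, f.2 x⟩, f.1.map_rel⟩
  invFun g := ⟨(Embedding.induce s).toHom.comp g, fun x => (g x).2⟩
  left_inv _ := rfl
  right_inv _ := rfl

def Iso.fixedPointsZPowersHomEquiv (σ : H ≃g H) :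
    fixedPoints (zpowers σ) (G →g H) ≃ (G →g H.induce {a | σ a = a}) :=
  (Equiv.subtypeEquivRight fun _ => mem_fixedPoints_zpowers_iff.trans smul_hom_eq_self_iff).trans
    (Hom.equivInduceOfMapsTo {a | σ a = a})

theorem card_hom_modEq_card_hom_induce_fixed [Finite V] [Finite W] {p : ℕ} [Fact p.Prime]
    (σ : H ≃g H) (hσ : orderOf σ = p) :
    Nat.card (G →g H) ≡ Nat.card (G →g H.induce {a | σ a = a}) [MOD p] := by
  have hpGroup : IsPGroup p (zpowers σ) :=
    IsPGroup.of_card (by rw [Nat.card_zpowers, hσ, pow_one])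
  rw [← Nat.card_congr σ.fixedPointsZPowersHomEquiv]
  exact hpGroup.card_modEq_card_fixedPoints _

end SimpleGraph

/-- If `π` is an automorphism of `H` of order `p`, then for every graph `G`,
`|Hom(G,H)| ≡ |Hom(G,H^π)| (mod p)`, where `H^π` is the induced subgraph on fixed points. -/
theorem stmt2 {VG VH : Type*} [Fintype VG] [Fintype VH]
    (G : SimpleGraph VG) (H : SimpleGraph VH) (p : ℕ) (hp : p.Prime)
    (π : Equiv.Perm VH)
    (hauto : ∀ a b, H.Adj (π a) (π b) ↔ H.Adj a b)
    (horder : orderOf π = p) :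
    (Nat.card (G →g H) : ZMod p)
      = (Nat.card (G →g H.induce {a : VH | π a = a}) : ZMod p) := by
  have : Fact p.Prime := ⟨hp⟩
  have hmod := SimpleGraph.card_hom_modEq_card_hom_induce_fixed (G := G) ⟨π, hauto _ _⟩
    ((SimpleGraph.Iso.orderOf_mk π _).trans horder)
  exact (ZMod.natCast_eq_natCast_iff _ _ _).mpr hmod
end

section
/- Let H be a finite tree that is not a star and has no automorphism of order p, where p is a prime. Then H has at least two distinct vertices α and β with deg(α) ≢ 1 (mod p) and deg(β) ≢ 1 (mod p). -/
/-!
Take a longest path `u, x₁, x₂, …, v` in `H`. Every neighbour of `x₁` other than `x₂` could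
replace `u`, so by maximality it is a leaf hanging at `x₁`. If `deg x₁ ≡ 1 (mod p)`, then `x₁`
carries a positive multiple of `p` leaves; these are interchangeable, so a permutation of order `p`
of them (Cauchy) is an automorphism of order `p`. The same applies to the penultimate vertex,
which differs from `x₁` as soon as the path has length at least 3, and a tree whose longest path
has length at most 2 is a star.
-/

open Finset

namespace SimpleGraph

variable {V : Type*} {H : SimpleGraph V}

lemma adj_apply_iff_of_neighborSet_eq {f : V → V}
    (hf : ∀ x, H.neighborSet (f x) = H.neighborSet x) (a b : V) :
    H.Adj (f a) (f b) ↔ H.Adj a b := by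
  have hleft : ∀ x y, H.Adj (f x) y ↔ H.Adj x y := fun x y => Set.ext_iff.mp (hf x) y
  rw [hleft, H.adj_comm, hleft, H.adj_comm]

lemma exists_orderOf_eq_of_neighborSet_eq {p : ℕ} (hp : p.Prime) (s : Finset V) (hs : p ≤ #s)
    (htwins : ∀ x ∈ s, ∀ y ∈ s, H.neighborSet x = H.neighborSet y) :
    ∃ π : Equiv.Perm V, (∀ a b, H.Adj (π a) (π b) ↔ H.Adj a b) ∧ orderOf π = p := by
  classical
  have := Fact.mk hp
  obtain ⟨σ, hσ⟩ := exists_prime_orderOf_dvd_card (G := Equiv.Perm s) p (by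
    rw [Fintype.card_perm, Fintype.card_coe]
    exact Nat.dvd_factorial hp.pos hs)
  refine ⟨Equiv.Perm.ofSubtype σ, adj_apply_iff_of_neighborSet_eq fun x => ?_, ?_⟩
  · by_cases hx : x ∈ s
    · rw [Equiv.Perm.ofSubtype_apply_of_mem σ hx]
      exact htwins _ (σ ⟨x, hx⟩).2 x hx
    · rw [Equiv.Perm.ofSubtype_apply_of_not_mem σ hx]
  · rw [orderOf_injective _ Equiv.Perm.ofSubtype_injective, hσ]

lemma exists_orderOf_eq_of_degree_eq_one [Fintype V] [DecidableRel H.Adj] {p : ℕ}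
    (hp : p.Prime) {x y u : V} (hy : H.Adj x y) (hu : H.Adj x u) (huy : u ≠ y)
    (hleaves : ∀ z, H.Adj x z → z ≠ y → H.neighborSet z = {x})
    (hdeg : (H.degree x : ZMod p) = 1) :
    ∃ π : Equiv.Perm V, (∀ a b, H.Adj (π a) (π b) ↔ H.Adj a b) ∧ orderOf π = p := by
  classical
  set s := (H.neighborFinset x).erase y
  have hcard : #s + 1 = H.degree x :=
    card_erase_add_one ((H.mem_neighborFinset x y).mpr hy)
  have hdvd : p ∣ #s := by
    have h : ((#s + 1 : ℕ) : ZMod p) = 1 := by rw [hcard, hdeg]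
    rwa [Nat.cast_succ, add_eq_right, ZMod.natCast_eq_zero_iff] at h
  have hpos : 0 < #s :=
    card_pos.mpr ⟨u, mem_erase.mpr ⟨huy, (H.mem_neighborFinset x u).mpr hu⟩⟩
  refine exists_orderOf_eq_of_neighborSet_eq hp s (Nat.le_of_dvd hpos hdvd) fun a ha b hb => ?_
  obtain ⟨hay, hxa⟩ := mem_erase.mp ha
  obtain ⟨hby, hxb⟩ := mem_erase.mp hb
  rw [hleaves a ((H.mem_neighborFinset x a).mp hxa) hay,
    hleaves b ((H.mem_neighborFinset x b).mp hxb) hby]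

lemma Connected.adj_iff_of_neighborSet_eq_singleton (hconn : H.Connected) {c : V}
    (hc : ∀ z, H.Adj c z → H.neighborSet z = {c}) (a b : V) :
    H.Adj a b ↔ (a = c ∧ b ≠ c) ∨ (b = c ∧ a ≠ c) := by
  have hstar : ∀ a, a = c ∨ H.Adj c a := by
    suffices ∀ {a d : V} (w : H.Walk a d), d = c → a = c ∨ H.Adj c a from
      fun a => this (hconn.preconnected a c).some rfl
    intro a d w hd
    induction w with
    | nil => exact Or.inl hd
    | @cons a b _ hab _ ih =>
      rcases ih hd with rfl | hcb
      · exact Or.inr hab.symm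
      · exact Or.inl (by simpa using (Set.ext_iff.mp (hc b hcb) a).mp hab.symm)
  have hleaf : ∀ a, a ≠ c → ∀ b, H.Adj a b → b = c := fun a hac b hab => by
    simpa using (Set.ext_iff.mp (hc a ((hstar a).resolve_left hac)) b).mp hab
  constructor
  · intro hab
    by_cases hac : a = c
    · exact Or.inl ⟨hac, fun hbc => hab.ne (hac.trans hbc.symm)⟩
    · exact Or.inr ⟨hleaf a hac b hab, hac⟩
  · rintro (⟨rfl, hbc⟩ | ⟨rfl, hac⟩)
    · exact (hstar b).resolve_left hbc
    · exact ((hstar a).resolve_left hac).symm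

namespace Walk

def IsLongestPath {u v : V} (w : H.Walk u v) : Prop :=
  w.IsPath ∧ ∀ ⦃a b : V⦄ (w' : H.Walk a b), w'.IsPath → w'.length ≤ w.length

lemma exists_isLongestPath [Finite V] [Nonempty V] (H : SimpleGraph V) :
    ∃ (u v : V) (w : H.Walk u v), w.IsLongestPath := by
  classical
  have := Fintype.ofFinite V
  have : Nonempty (Σ a b : V, H.Path a b) :=
    ⟨⟨Classical.arbitrary V, Classical.arbitrary V, Path.nil⟩⟩
  obtain ⟨⟨u, v, w, hw⟩, hmax⟩ :=
    Finite.exists_max fun P : Σ a b : V, H.Path a b => P.2.2.1.length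
  exact ⟨u, v, w, hw, fun a b w' hw' => hmax ⟨a, b, w', hw'⟩⟩

variable {u v : V} {w : H.Walk u v}

lemma IsLongestPath.reverse (hw : w.IsLongestPath) : w.reverse.IsLongestPath :=
  ⟨hw.1.reverse, fun _ _ w' hw' => (length_reverse w).symm ▸ hw.2 w' hw'⟩

lemma IsLongestPath.neighborSet_eq (hH : H.IsAcyclic) (hw : w.IsLongestPath) (hnil : ¬w.Nil) :
    H.neighborSet u = {w.snd} := by
  ext z
  refine ⟨fun hz => ?_, fun hz => (Set.mem_singleton_iff.mp hz) ▸ adj_snd hnil⟩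
  by_cases hzw : z ∈ w.support
  · exact hH.eq_snd_of_adj_start hw.1 hz hzw
  · have := hw.2 _ (hw.1.cons hzw (h := hz.symm))
    simp at this

lemma IsLongestPath.neighborSet_eq_of_adj_snd (hH : H.IsAcyclic) {x : V} {h : H.Adj u x}
    {q : H.Walk x v} (hw : (cons h q).IsLongestPath) {z : V} (hz : H.Adj x z) (hzq : z ≠ q.snd) :
    H.neighborSet z = {x} := by
  have hq : q.IsPath := hw.1.of_cons
  have hzs : z ∉ q.support := fun hzs => hzq (hH.eq_snd_of_adj_start hq hz hzs)
  have hw' : (cons hz.symm q).IsLongestPath :=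
    ⟨hq.cons hzs, fun _ _ w' hw'' => by simpa using hw.2 w' hw''⟩
  simpa using hw'.neighborSet_eq hH not_nil_cons

lemma IsLongestPath.exists_orderOf_eq_of_degree_snd [Fintype V] [DecidableRel H.Adj]
    (hH : H.IsAcyclic) {p : ℕ} (hp : p.Prime) (hw : w.IsLongestPath) (hlen : 2 ≤ w.length)
    (hdeg : (H.degree w.snd : ZMod p) = 1) :
    ∃ π : Equiv.Perm V, (∀ a b, H.Adj (π a) (π b) ↔ H.Adj a b) ∧ orderOf π = p := by
  cases w with
  | nil => simp at hlen
  | cons h q =>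
    have hq : ¬q.Nil := by
      rw [not_nil_iff_lt_length]
      simp only [length_cons] at hlen
      omega
    have huq : u ≠ q.snd := fun hu =>
      ((cons_isPath_iff h q).mp hw.1).2 (hu ▸ q.getVert_mem_support 1)
    exact exists_orderOf_eq_of_degree_eq_one hp (adj_snd hq) h.symm huq
      (fun _ hz hzq => hw.neighborSet_eq_of_adj_snd hH hz hzq) (by rwa [snd_cons] at hdeg)

lemma IsLongestPath.exists_neighborSet_eq_singleton (hH : H.IsAcyclic) (hw : w.IsLongestPath)
    (hlen : w.length ≤ 2) : ∃ c, ∀ z, H.Adj c z → H.neighborSet z = {c} := by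
  cases w with
  | nil => exact ⟨u, fun z hz => absurd (hw.2 (cons hz nil) (by simp [hz.ne])) (by simp)⟩
  | @cons _ x _ h q =>
    refine ⟨x, fun z hz => ?_⟩
    by_cases hzq : z = q.snd
    · cases q with
      | nil => exact absurd hzq hz.ne'
      | cons h' q' =>
        cases q' with
        | nil =>
          subst hzq
          simpa [snd_reverse] using hw.reverse.neighborSet_eq hH (by simp)
        | cons => simp at hlen
    · exact hw.neighborSet_eq_of_adj_snd hH hz hzq

end Walk

end SimpleGraph

open SimpleGraph

theorem stmt3_general {V : Type*} [Fintype V]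
    (H : SimpleGraph V) [DecidableRel H.Adj] (p : ℕ) (hp : p.Prime)
    (htree : H.IsTree)
    (hnotstar : ¬∃ c : V, ∀ a b : V, H.Adj a b ↔ ((a = c ∧ b ≠ c) ∨ (b = c ∧ a ≠ c)))
    (hnoauto : ¬∃ π : Equiv.Perm V,
      (∀ a b, H.Adj (π a) (π b) ↔ H.Adj a b) ∧ orderOf π = p) :
    ∃ α β : V, α ≠ β ∧ (H.degree α : ZMod p) ≠ 1 ∧ (H.degree β : ZMod p) ≠ 1 := by
  have := htree.connected.nonempty
  have hH := htree.isAcyclic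
  obtain ⟨u, v, w, hw⟩ := Walk.exists_isLongestPath H
  by_cases hlen : w.length ≤ 2
  · obtain ⟨c, hc⟩ := hw.exists_neighborSet_eq_singleton hH hlen
    exact (hnotstar ⟨c, htree.connected.adj_iff_of_neighborSet_eq_singleton hc⟩).elim
  have hsnd : w.snd ≠ w.penultimate := fun h => by
    have := hw.1.getVert_injOn (show 1 ≤ w.length by omega) (Nat.sub_le _ 1) h
    omega
  refine ⟨w.snd, w.penultimate, hsnd, fun h => hnoauto ?_, fun h => hnoauto ?_⟩
  · exact hw.exists_orderOf_eq_of_degree_snd hH hp (by omega) h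
  · exact hw.reverse.exists_orderOf_eq_of_degree_snd hH hp (by rw [Walk.length_reverse]; omega)
      (by rwa [Walk.snd_reverse])

/-- A finite tree that is not a star and has no automorphism of order `p` has at least two
distinct vertices of degree ≢ 1 (mod p). -/
theorem stmt3 {V : Type*} [Fintype V] [DecidableEq V]
    (H : SimpleGraph V) [DecidableRel H.Adj] (p : ℕ) (hp : p.Prime)
    (htree : H.IsTree)
    (hnotstar : ¬∃ c : V, ∀ a b : V, H.Adj a b ↔ ((a = c ∧ b ≠ c) ∨ (b = c ∧ a ≠ c)))
    (hnoauto : ¬∃ π : Equiv.Perm V,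
      (∀ a b, H.Adj (π a) (π b) ↔ H.Adj a b) ∧ orderOf π = p) :
    ∃ α β : V, α ≠ β ∧ (H.degree α : ZMod p) ≠ 1 ∧ (H.degree β : ZMod p) ≠ 1 :=
  stmt3_general H p hp htree hnotstar hnoauto
end

section
/- Let H be a square-free graph and let γ₀ γ₁ ⋯ γ_k be a non-consecutive walk in H (i.e., γ_{i-1} ≠ γ_{i+1} for all i). Let K be the path s v₁ ⋯ v_{k-1} t together with pendant vertices u₁,…,u_{k-1} where u_i is adjacent to v_i. Then every homomorphism σ : K → H with σ(u_i) = γ_i for all i and σ(s) ∈ N(γ₀) \ {γ₁} satisfies σ(v_i) = γ_{i-1} for all i ∈ [k-1]. -/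
/-! In a square-free graph two distinct vertices have at most one common neighbour. Inductively
`σ(v_i) = γ_{i-1}`, so both `σ(v_{i+1})` and `γ_i` are common neighbours of `γ_{i-1}` and
`γ_{i+1}`, which differ because the walk is non-consecutive; hence `σ(v_{i+1}) = γ_i`. At the
start, `σ(v_1)` and `γ_0` are common neighbours of `σ(s)` and `γ_1`. -/

open SimpleGraph

theorem SimpleGraph.commonNeighbors_subsingleton {V : Type*} {H : SimpleGraph V}
    (hsf : ∀ a b c d : V, a ≠ b → b ≠ c → c ≠ d → d ≠ a → a ≠ c → b ≠ d →
      ¬(H.Adj a b ∧ H.Adj b c ∧ H.Adj c d ∧ H.Adj d a))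
    {x y : V} (hxy : x ≠ y) : (H.commonNeighbors x y).Subsingleton := by
  intro a ⟨hxa, hya⟩ b ⟨hxb, hyb⟩
  by_contra hab
  exact hsf x a y b hxa.ne hya.ne.symm hyb.ne hxb.ne.symm hxy hab ⟨hxa, hya.symm, hyb, hxb.symm⟩

theorem stmt5_general {V : Type*}
    (H : SimpleGraph V)
    (hsf : ∀ a b c d : V, a ≠ b → b ≠ c → c ≠ d → d ≠ a → a ≠ c → b ≠ d →
      ¬(H.Adj a b ∧ H.Adj b c ∧ H.Adj c d ∧ H.Adj d a))
    (k : ℕ)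
    (γ : ℕ → V)
    (hwalk : ∀ i < k, H.Adj (γ i) (γ (i + 1)))
    (hnc : ∀ i, 1 ≤ i → i + 1 ≤ k → γ (i - 1) ≠ γ (i + 1))
    (σ : ℕ → V)
    (hadj : ∀ i < k, H.Adj (σ i) (σ (i + 1)))
    (hpin : ∀ i, 1 ≤ i → i + 1 ≤ k → H.Adj (σ i) (γ i))
    (hs : H.Adj (γ 0) (σ 0)) (hs1 : σ 0 ≠ γ 1) :
    ∀ i, 1 ≤ i → i + 1 ≤ k → σ i = γ (i - 1) := by
  have shift : ∀ j, j + 2 ≤ k → σ (j + 1) = γ j := by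
    intro j
    induction j with
    | zero =>
      intro hk
      exact commonNeighbors_subsingleton hsf hs1
        ⟨hadj 0 (by omega), (hpin 1 le_rfl hk).symm⟩ ⟨hs.symm, (hwalk 0 (by omega)).symm⟩
    | succ j ih =>
      intro hk
      have hσ : H.Adj (γ j) (σ (j + 2)) := ih (by omega) ▸ hadj (j + 1) (by omega)
      exact commonNeighbors_subsingleton hsf (by simpa using hnc (j + 1) (by omega) (by omega))
        ⟨hσ, (hpin (j + 2) (by omega) hk).symm⟩
        ⟨hwalk j (by omega), (hwalk (j + 1) (by omega)).symm⟩
  intro i hi hik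
  obtain ⟨j, rfl⟩ := Nat.exists_eq_add_of_le' hi
  simpa using shift j (by omega)

/-- Shifting lemma: for a square-free `H` and an nc-walk `γ₀ … γ_k`, any homomorphism of the
path gadget (path `s v₁ … v_{k-1} t` with pendant `u_i` pinned to `γ_i`) sending `s` into
`N(γ₀) \ {γ₁}` satisfies `σ(v_i) = γ_{i-1}` for all `i ∈ [k-1]`. -/
theorem stmt5 {V : Type*} [Fintype V]
    (H : SimpleGraph V)
    (hsf : ∀ a b c d : V, a ≠ b → b ≠ c → c ≠ d → d ≠ a → a ≠ c → b ≠ d →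
      ¬(H.Adj a b ∧ H.Adj b c ∧ H.Adj c d ∧ H.Adj d a))
    (k : ℕ) (hk : 1 ≤ k)
    (γ : ℕ → V)
    (hwalk : ∀ i < k, H.Adj (γ i) (γ (i + 1)))
    (hnc : ∀ i, 1 ≤ i → i + 1 ≤ k → γ (i - 1) ≠ γ (i + 1))
    (σ : ℕ → V)
    (hadj : ∀ i < k, H.Adj (σ i) (σ (i + 1)))
    (hpin : ∀ i, 1 ≤ i → i + 1 ≤ k → H.Adj (σ i) (γ i))
    (hs : H.Adj (γ 0) (σ 0)) (hs1 : σ 0 ≠ γ 1) :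
    ∀ i, 1 ≤ i → i + 1 ≤ k → σ i = γ (i - 1) :=
  stmt5_general H hsf k γ hwalk hnc σ hadj hpin hs hs1
end

section
/- Let H be a square-free graph, W = γ₀ γ₁ ⋯ γ_k an nc-walk in H with k ≥ 1, and K the gadget path s v₁ ⋯ v_{k-1} t with pendant u_i pinned to γ_i. Then for any ω_s ∈ N(γ₀) \ {γ₁} and ω_t ∈ N(γ_k) \ {γ_{k-1}}, there is no homomorphism σ : K → H with σ(u_i) = γ_i for all i, σ(s) = ω_s, and σ(t) = ω_t. -/
/-!
Let `σ` be a homomorphism of the gadget, so `σ 0 = ω_s`, `σ k = ω_t`. At every step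
`σ j, σ (j+1), γ (j+1), γ j` is a closed walk of length four whose diagonal `σ j, γ (j+1)` has
distinct ends, so square-freeness forces `σ (j+1) = γ j`: the image of the path trails the walk
by one step. The non-backtracking condition keeps the diagonal distinct at the next step, and
`ω_s ≠ γ₁` starts the induction. At the last step this gives `ω_t = γ_{k-1}`.
-/

namespace SimpleGraph

variable {V : Type*} {H : SimpleGraph V}

theorem eq_of_adj_of_adj_of_adj_of_adj
    (hsf : ∀ a b c d : V, a ≠ b → b ≠ c → c ≠ d → d ≠ a → a ≠ c → b ≠ d →
      ¬(H.Adj a b ∧ H.Adj b c ∧ H.Adj c d ∧ H.Adj d a))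
    {a b c d : V} (hab : H.Adj a b) (hbc : H.Adj b c) (hcd : H.Adj c d) (hda : H.Adj d a)
    (hac : a ≠ c) : b = d :=
  by_contra fun hbd => hsf a b c d hab.ne hbc.ne hcd.ne hda.ne hac hbd ⟨hab, hbc, hcd, hda⟩

theorem adj_and_ne_of_trailing
    (hsf : ∀ a b c d : V, a ≠ b → b ≠ c → c ≠ d → d ≠ a → a ≠ c → b ≠ d →
      ¬(H.Adj a b ∧ H.Adj b c ∧ H.Adj c d ∧ H.Adj d a))
    {k : ℕ} {γ σ : ℕ → V}
    (hwalk : ∀ i < k, H.Adj (γ i) (γ (i + 1)))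
    (hnc : ∀ i, 1 ≤ i → i + 1 ≤ k → γ (i - 1) ≠ γ (i + 1))
    (hσ : ∀ i < k, H.Adj (σ i) (σ (i + 1)))
    (hpin : ∀ i, 1 ≤ i → i ≤ k → H.Adj (σ i) (γ i))
    (h₀ : H.Adj (γ 0) (σ 0)) (h₀₁ : σ 0 ≠ γ 1) :
    ∀ j < k, H.Adj (γ j) (σ j) ∧ σ j ≠ γ (j + 1) := by
  intro j hj
  induction j with
  | zero => exact ⟨h₀, h₀₁⟩
  | succ j ih =>
    obtain ⟨hadj, hne⟩ := ih (by omega)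
    have hstep : σ (j + 1) = γ j :=
      eq_of_adj_of_adj_of_adj_of_adj hsf (hσ j (by omega)) (hpin (j + 1) (by omega) (by omega))
        (hwalk j (by omega)).symm hadj hne
    rw [hstep]
    exact ⟨(hwalk j (by omega)).symm, by simpa using hnc (j + 1) (by omega) (by omega)⟩

theorem eq_of_trailing
    (hsf : ∀ a b c d : V, a ≠ b → b ≠ c → c ≠ d → d ≠ a → a ≠ c → b ≠ d →
      ¬(H.Adj a b ∧ H.Adj b c ∧ H.Adj c d ∧ H.Adj d a))
    {k : ℕ} {γ σ : ℕ → V}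
    (hwalk : ∀ i < k, H.Adj (γ i) (γ (i + 1)))
    (hnc : ∀ i, 1 ≤ i → i + 1 ≤ k → γ (i - 1) ≠ γ (i + 1))
    (hσ : ∀ i < k, H.Adj (σ i) (σ (i + 1)))
    (hpin : ∀ i, 1 ≤ i → i ≤ k → H.Adj (σ i) (γ i))
    (h₀ : H.Adj (γ 0) (σ 0)) (h₀₁ : σ 0 ≠ γ 1) {j : ℕ} (hj : j < k) :
    σ (j + 1) = γ j :=
  have ⟨hadj, hne⟩ := adj_and_ne_of_trailing hsf hwalk hnc hσ hpin h₀ h₀₁ j hj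
  eq_of_adj_of_adj_of_adj_of_adj hsf (hσ j hj) (hpin (j + 1) (by omega) hj)
    (hwalk j hj).symm hadj hne

end SimpleGraph

theorem stmt6_general {V : Type*}
    (H : SimpleGraph V)
    (hsf : ∀ a b c d : V, a ≠ b → b ≠ c → c ≠ d → d ≠ a → a ≠ c → b ≠ d →
      ¬(H.Adj a b ∧ H.Adj b c ∧ H.Adj c d ∧ H.Adj d a))
    (k : ℕ) (hk : 1 ≤ k)
    (γ : ℕ → V)
    (hwalk : ∀ i < k, H.Adj (γ i) (γ (i + 1)))
    (hnc : ∀ i, 1 ≤ i → i + 1 ≤ k → γ (i - 1) ≠ γ (i + 1))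
    (ωs ωt : V)
    (hωs : H.Adj (γ 0) ωs) (hωs1 : ωs ≠ γ 1)
    (hωt : H.Adj (γ k) ωt) (hωt1 : ωt ≠ γ (k - 1)) :
    ¬∃ σ : ℕ → V,
      (∀ i < k, H.Adj (σ i) (σ (i + 1))) ∧
      (∀ i, 1 ≤ i → i + 1 ≤ k → H.Adj (σ i) (γ i)) ∧
      σ 0 = ωs ∧ σ k = ωt := by
  rintro ⟨σ, hσ, hpin, rfl, rfl⟩
  have hpin' : ∀ i, 1 ≤ i → i ≤ k → H.Adj (σ i) (γ i) := fun i hi hik =>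
    (Nat.lt_or_eq_of_le hik).elim (fun hlt => hpin i hi hlt) fun heq => heq ▸ hωt.symm
  have hlast := SimpleGraph.eq_of_trailing hsf hwalk hnc hσ hpin' hωs hωs1 (j := k - 1) (by omega)
  rw [Nat.sub_add_cancel hk] at hlast
  exact hωt1 hlast

/-- For the path gadget on an nc-walk `γ₀ … γ_k` in a square-free graph, there is no
homomorphism sending `s` to `ω_s ∈ N(γ₀) \ {γ₁}` and `t` to `ω_t ∈ N(γ_k) \ {γ_{k-1}}`. -/
theorem stmt6 {V : Type*} [Fintype V]
    (H : SimpleGraph V)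
    (hsf : ∀ a b c d : V, a ≠ b → b ≠ c → c ≠ d → d ≠ a → a ≠ c → b ≠ d →
      ¬(H.Adj a b ∧ H.Adj b c ∧ H.Adj c d ∧ H.Adj d a))
    (k : ℕ) (hk : 1 ≤ k)
    (γ : ℕ → V)
    (hwalk : ∀ i < k, H.Adj (γ i) (γ (i + 1)))
    (hnc : ∀ i, 1 ≤ i → i + 1 ≤ k → γ (i - 1) ≠ γ (i + 1))
    (ωs ωt : V)
    (hωs : H.Adj (γ 0) ωs) (hωs1 : ωs ≠ γ 1)
    (hωt : H.Adj (γ k) ωt) (hωt1 : ωt ≠ γ (k - 1)) :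
    ¬∃ σ : ℕ → V,
      (∀ i < k, H.Adj (σ i) (σ (i + 1))) ∧
      (∀ i, 1 ≤ i → i + 1 ≤ k → H.Adj (σ i) (γ i)) ∧
      σ 0 = ωs ∧ σ k = ωt :=
  stmt6_general H hsf k hk γ hwalk hnc ωs ωt hωs hωs1 hωt hωt1
end

section
/- Let H be a square-free graph, W = γ₀ γ₁ ⋯ γ_k an nc-walk in H with k ≥ 1, and K the gadget path s v₁ ⋯ v_{k-1} t with pendant u_i pinned to γ_i. Then the number of homomorphisms σ : K → H with σ(u_i) = γ_i for all i, σ(s) = γ₁, and σ(t) = γ_{k-1} equals 1 + Σ_{i=1}^{k-1} (deg(γ_i) − 1). -/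
/-!
If `σ` is a homomorphism of the gadget then for every `i < k` either `σ i = γ (i + 1)` or
`σ (i + 1) = γ i`: otherwise `γ i, σ i, σ (i + 1), γ (i + 1)` is a 4-cycle. As `σ 0 = γ 1`, the map
`σ` runs one step ahead of the walk up to some position `j ≥ 1`, takes a neighbour `w` of `γ j`
there, and from then on, since the walk never backtracks, runs one step behind it. Conversely every
such map is a homomorphism. Requiring `w ≠ γ (j + 1)` when `j < k` makes `(j, w)` unique, leaving
`deg (γ j) - 1` choices for each `1 ≤ j ≤ k - 1` and one map with `j = k`.
-/

open Finset

theorem SimpleGraph.eq_or_eq_of_square {V : Type*} {H : SimpleGraph V}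
    (hsf : ∀ a b c d : V, a ≠ b → b ≠ c → c ≠ d → d ≠ a → a ≠ c → b ≠ d →
      ¬(H.Adj a b ∧ H.Adj b c ∧ H.Adj c d ∧ H.Adj d a))
    {a b c d : V} (hab : H.Adj a b) (hbc : H.Adj b c) (hcd : H.Adj c d) (hda : H.Adj d a) :
    a = c ∨ b = d := by
  by_contra! h
  exact hsf a b c d hab.ne hbc.ne hcd.ne hda.ne h.1 h.2 ⟨hab, hbc, hcd, hda⟩

namespace PathGadget

variable {V : Type*} (H : SimpleGraph V) (γ : ℕ → V) (k : ℕ)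

structure IsHom (σ : Fin (k + 1) → V) : Prop where
  adj_succ : ∀ i : ℕ, (h : i < k) →
    H.Adj (σ ⟨i, Nat.lt_add_one_of_lt h⟩) (σ ⟨i + 1, Nat.add_lt_add_right h 1⟩)
  adj_pendant : ∀ i : ℕ, 1 ≤ i → (h : i + 1 ≤ k) →
    H.Adj (σ ⟨i, Nat.lt_add_one_of_lt h⟩) (γ i)
  first : σ 0 = γ 1
  last : σ ⟨k, Nat.lt_add_one k⟩ = γ (k - 1)

def turn (j : ℕ) (w : V) (i : Fin (k + 1)) : V :=
  if (i : ℕ) < j then γ (i + 1) else if (i : ℕ) = j then w else γ (i - 1)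

@[simp]
theorem turn_mk (j : ℕ) (w : V) (i : ℕ) (h : i < k + 1) :
    turn γ k j w ⟨i, h⟩ = if i < j then γ (i + 1) else if i = j then w else γ (i - 1) :=
  rfl

def turnParams [DecidableEq V] [H.LocallyFinite] : Finset ((_ : ℕ) × V) :=
  insert ⟨k, γ (k - 1)⟩
    ((Icc 1 (k - 1)).sigma fun j => (H.neighborFinset (γ j)).erase (γ (j + 1)))

variable {H γ k}

theorem turn_isHom (hwalk : ∀ i < k, H.Adj (γ i) (γ (i + 1))) {j : ℕ} {w : V}
    (hj : 1 ≤ j) (hjk : j ≤ k) (hw : H.Adj (γ j) w) (hwk : j = k → w = γ (k - 1)) :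
    IsHom H γ k (turn γ k j w) where
  adj_succ i hi := by
    have := hwalk (i + 1)
    have := hwalk (i - 1)
    simp only [turn_mk]
    split_ifs <;> grind [SimpleGraph.Adj.symm]
  adj_pendant i hi _ := by
    have := hwalk i
    have := hwalk (i - 1)
    simp only [turn_mk]
    split_ifs <;> grind [SimpleGraph.Adj.symm]
  first := if_pos hj
  last := by
    simp only [turn_mk]
    split_ifs <;> grind

theorem eq_and_eq_of_turn_eq {j j' : ℕ} {w w' : V} (hjj' : j ≤ j') (hj' : j' ≤ k)
    (hw : j < k → w ≠ γ (j + 1)) (h : turn γ k j w = turn γ k j' w') : j = j' ∧ w = w' := by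
  have hj := congrFun h ⟨j, Nat.lt_add_one_of_le (hjj'.trans hj')⟩
  simp only [turn_mk, lt_irrefl, if_false, if_true] at hj
  rcases hjj'.lt_or_eq with hlt | rfl
  · exact absurd (hj.trans (if_pos hlt)) (hw (by omega))
  · simpa using hj

theorem turn_injOn :
    Set.InjOn (fun p : (_ : ℕ) × V => turn γ k p.1 p.2)
      {p | p.1 ≤ k ∧ (p.1 < k → p.2 ≠ γ (p.1 + 1))} := by
  rintro ⟨j, w⟩ ⟨hj, hw⟩ ⟨j', w'⟩ ⟨hj', hw'⟩ h
  obtain ⟨rfl, rfl⟩ | ⟨rfl, rfl⟩ := (le_total j j').imp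
    (fun hle => eq_and_eq_of_turn_eq hle hj' hw h)
    (fun hle => eq_and_eq_of_turn_eq hle hj hw' h.symm)
  all_goals rfl

theorem mem_turnParams [DecidableEq V] [H.LocallyFinite] {p : (_ : ℕ) × V} :
    p ∈ turnParams H γ k ↔
      p = ⟨k, γ (k - 1)⟩ ∨ (1 ≤ p.1 ∧ p.1 ≤ k - 1) ∧ p.2 ≠ γ (p.1 + 1) ∧ H.Adj (γ p.1) p.2 := by
  simp [turnParams]

theorem card_turnParams [DecidableEq V] [H.LocallyFinite] (hk : 1 ≤ k)
    (hwalk : ∀ i < k, H.Adj (γ i) (γ (i + 1))) :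
    #(turnParams H γ k) = 1 + ∑ j ∈ Icc 1 (k - 1), (H.degree (γ j) - 1) := by
  rw [turnParams, card_insert_of_notMem (by simp; omega), card_sigma, add_comm]
  congr 1
  refine sum_congr rfl fun j hj => ?_
  rw [card_erase_of_mem, SimpleGraph.card_neighborFinset_eq_degree]
  simpa using hwalk j (by simp at hj; omega)

section Walk

variable
  (hsf : ∀ a b c d : V, a ≠ b → b ≠ c → c ≠ d → d ≠ a → a ≠ c → b ≠ d →
    ¬(H.Adj a b ∧ H.Adj b c ∧ H.Adj c d ∧ H.Adj d a))
  (hk : 1 ≤ k) (hwalk : ∀ i < k, H.Adj (γ i) (γ (i + 1)))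
  (hnc : ∀ i, 1 ≤ i → i + 1 ≤ k → γ (i - 1) ≠ γ (i + 1))

namespace IsHom

variable {σ : Fin (k + 1) → V} (hσ : IsHom H γ k σ)
include hσ hk hwalk

theorem adj_pin (i : ℕ) (hi : i ≤ k) : H.Adj (σ ⟨i, Nat.lt_add_one_of_le hi⟩) (γ i) := by
  rcases Nat.eq_zero_or_pos i with rfl | hi0
  · exact hσ.first ▸ (hwalk 0 hk).symm
  rcases hi.lt_or_eq with hik | rfl
  · exact hσ.adj_pendant i hi0 hik
  · rw [hσ.last]
    simpa [Nat.sub_add_cancel hk] using hwalk (i - 1) (by omega)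

include hsf

theorem eq_or_eq (i : ℕ) (hi : i < k) :
    σ ⟨i, Nat.lt_add_one_of_lt hi⟩ = γ (i + 1) ∨ σ ⟨i + 1, Nat.add_lt_add_right hi 1⟩ = γ i :=
  (SimpleGraph.eq_or_eq_of_square hsf (hσ.adj_pin hk hwalk i hi.le).symm (hσ.adj_succ i hi)
    (hσ.adj_pin hk hwalk (i + 1) hi) (hwalk i hi).symm).symm.imp id Eq.symm

include hnc

theorem eq_pred_of_turn {j : ℕ} (hj : j < k) (hturn : σ ⟨j + 1, Nat.add_lt_add_right hj 1⟩ = γ j) :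
    ∀ i, j < i → (hi : i ≤ k) → σ ⟨i, Nat.lt_add_one_of_le hi⟩ = γ (i - 1) := by
  intro i hji
  induction i, hji using Nat.le_induction with
  | base => exact fun _ => hturn
  | succ i hji ih =>
    intro hi
    refine (hσ.eq_or_eq hsf hk hwalk i (by omega)).resolve_left fun h => ?_
    exact hnc i (by omega) hi ((ih (by omega)).symm.trans h)

theorem exists_turn [DecidableEq V] [H.LocallyFinite] :
    ∃ p ∈ turnParams H γ k, turn γ k p.1 p.2 = σ := by
  -- `j` is the first position `≥ 1` where `σ` stops running one step ahead of `γ`, or `k`.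
  have hex : ∃ j, 1 ≤ j ∧ ∀ h : j < k, σ ⟨j, Nat.lt_add_one_of_lt h⟩ ≠ γ (j + 1) :=
    ⟨k, hk, fun h => absurd h (lt_irrefl k)⟩
  obtain ⟨j, ⟨hj1, hjne⟩, hmin⟩ :
      ∃ j, (1 ≤ j ∧ ∀ h : j < k, σ ⟨j, Nat.lt_add_one_of_lt h⟩ ≠ γ (j + 1)) ∧
        ∀ i < j, ¬(1 ≤ i ∧ ∀ h : i < k, σ ⟨i, Nat.lt_add_one_of_lt h⟩ ≠ γ (i + 1)) :=
    ⟨Nat.find hex, Nat.find_spec hex, fun i => Nat.find_min hex⟩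
  have hjk : j ≤ k := not_lt.1 fun h => hmin k h ⟨hk, fun h => absurd h (lt_irrefl k)⟩
  have hbefore : ∀ i (hi : i < j),
      σ ⟨i, Nat.lt_add_one_of_le (hi.le.trans hjk)⟩ = γ (i + 1) := by
    intro i hi
    rcases Nat.eq_zero_or_pos i with rfl | hi0
    · exact hσ.first
    · by_contra hne
      exact hmin i hi ⟨hi0, fun _ => hne⟩
  have hafter : ∀ i, j < i → (hi : i ≤ k) → σ ⟨i, Nat.lt_add_one_of_le hi⟩ = γ (i - 1) :=
    fun i hji hi => hσ.eq_pred_of_turn hsf hk hwalk hnc (by omega)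
      ((hσ.eq_or_eq hsf hk hwalk j (by omega)).resolve_left (hjne (by omega))) i hji hi
  refine ⟨⟨j, σ ⟨j, Nat.lt_add_one_of_le hjk⟩⟩, mem_turnParams.2 ?_, ?_⟩
  · rcases hjk.lt_or_eq with hjk | rfl
    · exact Or.inr ⟨⟨hj1, Nat.le_sub_one_of_lt hjk⟩, hjne hjk, (hσ.adj_pin hk hwalk j hjk.le).symm⟩
    · exact Or.inl (by rw [hσ.last])
  · funext ⟨i, hi⟩
    simp only [turn_mk]
    split_ifs with h₁ h₂
    · exact (hbefore i h₁).symm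
    · simp only [h₂]
    · exact (hafter i (by omega) (by omega)).symm

end IsHom

variable [DecidableEq V] [H.LocallyFinite]
include hsf hk hwalk hnc

theorem setOf_isHom_eq_image :
    {σ | IsHom H γ k σ} = (fun p : (_ : ℕ) × V => turn γ k p.1 p.2) '' turnParams H γ k := by
  ext σ
  refine ⟨fun hσ => hσ.exists_turn hsf hk hwalk hnc, ?_⟩
  rintro ⟨⟨j, w⟩, hp, rfl⟩
  rcases mem_turnParams.1 hp with h | ⟨⟨hj1, hj⟩, -, hw⟩
  · cases h
    have hlast : H.Adj (γ k) (γ (k - 1)) := by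
      simpa [Nat.sub_add_cancel hk] using (hwalk (k - 1) (by omega)).symm
    exact turn_isHom hwalk hk le_rfl hlast fun _ => rfl
  · exact turn_isHom hwalk hj1 (by omega) hw (by omega)

theorem ncard_setOf_isHom :
    {σ | IsHom H γ k σ}.ncard = 1 + ∑ j ∈ Icc 1 (k - 1), (H.degree (γ j) - 1) := by
  have hsub : ↑(turnParams H γ k) ⊆
      {p : (_ : ℕ) × V | p.1 ≤ k ∧ (p.1 < k → p.2 ≠ γ (p.1 + 1))} := by
    intro p hp
    rcases mem_turnParams.1 hp with rfl | ⟨⟨-, hj⟩, hw, -⟩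
    · exact ⟨le_rfl, fun h => absurd h (lt_irrefl k)⟩
    · exact ⟨by omega, fun _ => hw⟩
  rw [setOf_isHom_eq_image hsf hk hwalk hnc, (turn_injOn.mono hsub).ncard_image,
    Set.ncard_coe_finset, card_turnParams hk hwalk]

end Walk

end PathGadget

/-- For the path gadget on an nc-walk `γ₀ … γ_k` in a square-free graph, the number of
homomorphisms with `σ(s) = γ₁` and `σ(t) = γ_{k-1}` equals `1 + Σ_{i=1}^{k-1} (deg(γ_i) - 1)`. -/
theorem stmt8 {V : Type*} [Fintype V] [DecidableEq V]
    (H : SimpleGraph V) [DecidableRel H.Adj]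
    (hsf : ∀ a b c d : V, a ≠ b → b ≠ c → c ≠ d → d ≠ a → a ≠ c → b ≠ d →
      ¬(H.Adj a b ∧ H.Adj b c ∧ H.Adj c d ∧ H.Adj d a))
    (k : ℕ) (hk : 1 ≤ k)
    (γ : ℕ → V)
    (hwalk : ∀ i < k, H.Adj (γ i) (γ (i + 1)))
    (hnc : ∀ i, 1 ≤ i → i + 1 ≤ k → γ (i - 1) ≠ γ (i + 1)) :
    Set.ncard {σ : Fin (k + 1) → V |
      (∀ i : ℕ, (h : i < k) →
        H.Adj (σ ⟨i, by omega⟩) (σ ⟨i + 1, by omega⟩)) ∧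
      (∀ i : ℕ, 1 ≤ i → (h : i + 1 ≤ k) → H.Adj (σ ⟨i, by omega⟩) (γ i)) ∧
      σ 0 = γ 1 ∧ σ ⟨k, by omega⟩ = γ (k - 1)}
      = 1 + ∑ i ∈ Finset.Icc 1 (k - 1), (H.degree (γ i) - 1) := by
  convert PathGadget.ncard_setOf_isHom hsf hk hwalk hnc using 4 with σ
  exact ⟨fun ⟨h₁, h₂, h₃, h₄⟩ => ⟨h₁, h₂, h₃, h₄⟩, fun ⟨h₁, h₂, h₃, h₄⟩ => ⟨h₁, h₂, h₃, h₄⟩⟩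
end

section
/- Let H be a square-free graph and C = θ γ₁ γ₂ ⋯ γ_k θ a cycle in H of length at least 3. Let J be the gadget consisting of a cycle s v₁ ⋯ v_k s with pendant vertices u_i adjacent to v_i (pinned to γ_i) and a pendant vertex x adjacent to s (pinned to θ). Then every homomorphism σ : J → H with σ(u_i) = γ_i and σ(x) = θ satisfies σ(s) ∈ {γ₁, γ_k}. -/
/-!
If `σ(s) ≠ γ₁`, the closed 4-walks `σ(v_i) σ(v_{i+1}) γ_{i+1} γ_i` (with `v₀ = s`, `γ₀ = θ`)
cannot be squares, which forces `σ(v_{i+1}) = γ_i` for every `i < k`: the image of the gadget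
cycle runs one step behind `C`. Then the 4-walk `σ(v_k) σ(s) θ γ_k` with `σ(v_k) = γ_{k-1} ≠ θ`
forces `σ(s) = γ_k`.
-/

namespace SimpleGraph

variable {V : Type*} (H : SimpleGraph V)

def SquareFree : Prop :=
  ∀ a b c d : V, a ≠ b → b ≠ c → c ≠ d → d ≠ a → a ≠ c → b ≠ d →
    ¬(H.Adj a b ∧ H.Adj b c ∧ H.Adj c d ∧ H.Adj d a)

variable {H}

theorem SquareFree.eq_or_eq_of_adj (hsf : H.SquareFree) {a b c d : V}
    (hab : H.Adj a b) (hbc : H.Adj b c) (hcd : H.Adj c d) (hda : H.Adj d a) :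
    a = c ∨ b = d := by
  by_contra! h
  exact hsf a b c d hab.ne hbc.ne hcd.ne hda.ne h.1 h.2 ⟨hab, hbc, hcd, hda⟩

theorem SquareFree.eq_pred_of_pinned_walk (hsf : H.SquareFree) {k : ℕ} {γ σ : ℕ → V}
    (hdist : ∀ i j, i ≤ k → j ≤ k → i ≠ j → γ i ≠ γ j)
    (hwalk : ∀ i < k, H.Adj (γ i) (γ (i + 1)))
    (hadj : ∀ i < k, H.Adj (σ i) (σ (i + 1)))
    (hpin : ∀ i ≤ k, H.Adj (σ i) (γ i))
    (h₀ : σ 0 ≠ γ 1) :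
    ∀ n < k, σ (n + 1) = γ n := by
  have step : ∀ n < k, σ n ≠ γ (n + 1) → σ (n + 1) = γ n := fun n hn hne =>
    (hsf.eq_or_eq_of_adj (hadj n hn) (hpin (n + 1) hn) (hwalk n hn).symm
      (hpin n hn.le).symm).resolve_left hne
  intro n
  induction n with
  | zero => exact fun hk => step 0 hk h₀
  | succ n ih =>
    intro hn
    refine step (n + 1) hn ?_
    rw [ih (by omega)]
    exact hdist n (n + 2) (by omega) (by omega) (by omega)

end SimpleGraph

theorem stmt9_general {V : Type*}
    (H : SimpleGraph V)
    (hsf : ∀ a b c d : V, a ≠ b → b ≠ c → c ≠ d → d ≠ a → a ≠ c → b ≠ d →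
      ¬(H.Adj a b ∧ H.Adj b c ∧ H.Adj c d ∧ H.Adj d a))
    (k : ℕ) (hk : 2 ≤ k)
    (γ : ℕ → V)
    (hdist : ∀ i j, i ≤ k → j ≤ k → i ≠ j → γ i ≠ γ j)
    (hwalk : ∀ i < k, H.Adj (γ i) (γ (i + 1)))
    (hclose : H.Adj (γ k) (γ 0))
    (σ : ℕ → V)
    (hadj : ∀ i < k, H.Adj (σ i) (σ (i + 1)))
    (hadjclose : H.Adj (σ k) (σ 0))
    (hpin : ∀ i, 1 ≤ i → i ≤ k → H.Adj (σ i) (γ i))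
    (hx : H.Adj (σ 0) (γ 0)) :
    σ 0 = γ 1 ∨ σ 0 = γ k := by
  have hsf : H.SquareFree := hsf
  have hpin₀ : ∀ i ≤ k, H.Adj (σ i) (γ i) := fun
    | 0, _ => hx
    | i + 1, hi => hpin (i + 1) (Nat.succ_pos i) hi
  refine or_iff_not_imp_left.2 fun h₁ => ?_
  have hσk : σ k = γ (k - 1) := by
    simpa [Nat.sub_add_cancel (by omega : 1 ≤ k)] using
      hsf.eq_pred_of_pinned_walk hdist hwalk hadj hpin₀ h₁ (k - 1) (by omega)
  refine (hsf.eq_or_eq_of_adj hadjclose hx hclose.symm (hpin₀ k le_rfl).symm).resolve_left ?_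
  rw [hσk]
  exact hdist (k - 1) 0 (by omega) (by omega) (by omega)

/-- For the cycle vertex gadget built on a cycle `θ γ₁ … γ_k θ` (length ≥ 3, `θ = γ 0`) in a
square-free graph, every homomorphism respecting the pins maps `s` into `{γ₁, γ_k}`. -/
theorem stmt9 {V : Type*} [Fintype V]
    (H : SimpleGraph V)
    (hsf : ∀ a b c d : V, a ≠ b → b ≠ c → c ≠ d → d ≠ a → a ≠ c → b ≠ d →
      ¬(H.Adj a b ∧ H.Adj b c ∧ H.Adj c d ∧ H.Adj d a))
    (k : ℕ) (hk : 2 ≤ k)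
    (γ : ℕ → V)
    (hdist : ∀ i j, i ≤ k → j ≤ k → i ≠ j → γ i ≠ γ j)
    (hwalk : ∀ i < k, H.Adj (γ i) (γ (i + 1)))
    (hclose : H.Adj (γ k) (γ 0))
    (σ : ℕ → V)
    (hadj : ∀ i < k, H.Adj (σ i) (σ (i + 1)))
    (hadjclose : H.Adj (σ k) (σ 0))
    (hpin : ∀ i, 1 ≤ i → i ≤ k → H.Adj (σ i) (γ i))
    (hx : H.Adj (σ 0) (γ 0)) :
    σ 0 = γ 1 ∨ σ 0 = γ k :=
  stmt9_general H hsf k hk γ hdist hwalk hclose σ hadj hadjclose hpin hx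
end

section
/- Let H be a square-free graph, C = θ γ₁ ⋯ γ_k θ a cycle in H of length at least 3 with deg(γ_i) ≡ 1 (mod p) for all i ∈ [k], and K the gadget path s v₁ ⋯ v_k t with pendants u_i pinned to γ_i. Then the number of homomorphisms σ : K → H with σ(u_i) = γ_i, σ(s) = γ₁, and σ(t) = γ_k is congruent to 1 modulo p. -/
/-!
Number the gadget `s, v₁, …, v_k, t` as `0, …, k + 1`. Appending one vertex shows that the
number `W n x` of admissible walks `σ 0, …, σ n` ending at `x` satisfies
`W (n + 1) x = [x is allowed at n + 1] · ∑_{z ~ x} W n z`.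
Hence `W n x ≡ [x ~ γ n] (mod p)` for `1 ≤ n ≤ k`: the sum counts common neighbours of `x`
and `γ n`, which is `deg (γ n) ≡ 1` if `x = γ n`, and is exactly one (namely `γ (n + 1)`)
otherwise, because `H` has no 4-cycle.
The final step into `t = γ k` gives `deg (γ k) ≡ 1`.
-/

open Finset SimpleGraph

namespace SimpleGraph

variable {V : Type*} [Fintype V] (H : SimpleGraph V) [DecidableRel H.Adj]

/-- Allowed images of the gadget vertices `s = 0`, `vᵢ = i` and `t = k + 1`; the image of `t`
is imposed separately, as the endpoint of the walk. -/
def gadgetPins (γ : ℕ → V) (k : ℕ) (i : ℕ) : Finset V :=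
  if i = 0 then {γ 1} else if i ≤ k then H.neighborFinset (γ i) else univ

variable {H}

lemma gadgetPins_zero (γ : ℕ → V) (k : ℕ) : H.gadgetPins γ k 0 = {γ 1} := rfl

lemma gadgetPins_of_le (γ : ℕ → V) {k i : ℕ} (hi : 1 ≤ i) (hik : i ≤ k) :
    H.gadgetPins γ k i = H.neighborFinset (γ i) := by
  simp [gadgetPins, hik, Nat.one_le_iff_ne_zero.1 hi]

lemma gadgetPins_of_lt (γ : ℕ → V) {k i : ℕ} (hki : k < i) : H.gadgetPins γ k i = univ := by
  simp [gadgetPins, hki.not_ge, (Nat.zero_le k).trans_lt hki |>.ne']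

variable [DecidableEq V]

lemma sum_neighborFinset_ite_adj {R : Type*} [AddCommMonoidWithOne R] (x y : V) :
    ∑ z ∈ H.neighborFinset x, (if H.Adj z y then 1 else 0 : R) =
      #(H.neighborFinset x ∩ H.neighborFinset y) := by
  rw [sum_boole, ← filter_mem_eq_inter]
  simp only [mem_neighborFinset, adj_comm]

lemma neighborFinset_inter_eq_singleton
    (hsf : ∀ a b c d : V, a ≠ b → b ≠ c → c ≠ d → d ≠ a → a ≠ c → b ≠ d →
      ¬(H.Adj a b ∧ H.Adj b c ∧ H.Adj c d ∧ H.Adj d a))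
    {x y w : V} (hxy : x ≠ y) (hxw : H.Adj x w) (hyw : H.Adj y w) :
    H.neighborFinset x ∩ H.neighborFinset y = {w} := by
  ext z
  simp only [mem_inter, mem_neighborFinset, mem_singleton]
  refine ⟨fun ⟨hxz, hyz⟩ => ?_, fun hz => hz ▸ ⟨hxw, hyw⟩⟩
  by_contra hzw
  exact hsf x z y w hxz.ne hyz.ne' hyw.ne hxw.ne' hxy hzw ⟨hxz, hyz.symm, hyw, hxw.symm⟩

variable (H) in
def pinnedWalks (A : ℕ → Finset V) (n : ℕ) (x : V) : Finset (Fin (n + 1) → V) :=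
  {τ | (∀ j : Fin n, H.Adj (τ j.castSucc) (τ j.succ)) ∧
      (∀ j : Fin (n + 1), τ j ∈ A j) ∧ τ (Fin.last n) = x}

@[simp]
lemma mem_pinnedWalks {A : ℕ → Finset V} {n : ℕ} {x : V} {τ : Fin (n + 1) → V} :
    τ ∈ H.pinnedWalks A n x ↔
      (∀ j : Fin n, H.Adj (τ j.castSucc) (τ j.succ)) ∧ (∀ j : Fin (n + 1), τ j ∈ A j) ∧
        τ (Fin.last n) = x := by
  simp [pinnedWalks]

lemma pinnedWalks_eq_empty {A : ℕ → Finset V} {n : ℕ} {x : V} (hx : x ∉ A n) :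
    H.pinnedWalks A n x = ∅ :=
  eq_empty_of_forall_notMem fun τ hτ => hx <| by
    obtain ⟨-, hA, rfl⟩ := mem_pinnedWalks.1 hτ
    exact hA (Fin.last n)

lemma card_pinnedWalks_zero (A : ℕ → Finset V) (x : V) :
    #(H.pinnedWalks A 0 x) = if x ∈ A 0 then 1 else 0 := by
  split_ifs with hx
  · rw [card_eq_one]
    refine ⟨fun _ => x, eq_singleton_iff_unique_mem.2 ⟨?_, fun τ hτ => ?_⟩⟩
    · simp [hx]
    · funext j
      rw [Fin.fin_one_eq_zero j, ← (mem_pinnedWalks.1 hτ).2.2]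
      rfl
  · rw [pinnedWalks_eq_empty hx, card_empty]

lemma card_pinnedWalks_succ_of_mem (A : ℕ → Finset V) (n : ℕ) {x : V} (hx : x ∈ A (n + 1)) :
    #(H.pinnedWalks A (n + 1) x) = #((H.neighborFinset x).biUnion (H.pinnedWalks A n)) := by
  refine card_nbij' Fin.init (fun τ => Fin.snoc (α := fun _ => V) τ x) (fun τ hτ => ?_)
    (fun τ hτ => ?_) (fun τ hτ => ?_) (fun τ _ => Fin.init_snoc _ _)
  · obtain ⟨hadj, hA, hlast⟩ := mem_pinnedWalks.1 (mem_coe.1 hτ)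
    refine mem_biUnion.2 ⟨τ (Fin.last n).castSucc, ?_, ?_⟩
    · simpa [← hlast, adj_comm] using hadj (Fin.last n)
    · exact mem_pinnedWalks.2 ⟨fun j => hadj j.castSucc, fun j => hA j.castSucc, rfl⟩
  · obtain ⟨z, hz, hτ⟩ := mem_biUnion.1 (mem_coe.1 hτ)
    obtain ⟨hadj, hA, rfl⟩ := mem_pinnedWalks.1 hτ
    refine mem_pinnedWalks.2 ⟨fun j => ?_, fun j => ?_, Fin.snoc_last _ _⟩
    · induction j using Fin.lastCases with
      | last => simpa [adj_comm] using hz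
      | cast j =>
        simp only [← Fin.castSucc_succ, Fin.snoc_castSucc]
        exact hadj j
    · induction j using Fin.lastCases with
      | last => simpa using hx
      | cast j => simpa using hA j
  · simpa [(mem_pinnedWalks.1 (mem_coe.1 hτ)).2.2] using Fin.snoc_init_self τ

lemma card_pinnedWalks_succ (A : ℕ → Finset V) (n : ℕ) (x : V) :
    #(H.pinnedWalks A (n + 1) x) =
      if x ∈ A (n + 1) then ∑ z ∈ H.neighborFinset x, #(H.pinnedWalks A n z) else 0 := by
  split_ifs with hx
  · rw [card_pinnedWalks_succ_of_mem A n hx, card_biUnion]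
    intro z _ z' _ hne
    refine Finset.disjoint_left.2 fun τ hz hz' => hne ?_
    exact (mem_pinnedWalks.1 hz).2.2.symm.trans (mem_pinnedWalks.1 hz').2.2
  · rw [pinnedWalks_eq_empty hx, card_empty]

lemma coe_pinnedWalks_gadgetPins (γ : ℕ → V) (k : ℕ) :
    (H.pinnedWalks (H.gadgetPins γ k) (k + 1) (γ k) : Set (Fin (k + 2) → V)) =
      {σ | (∀ i : ℕ, (h : i < k + 1) →
          H.Adj (σ ⟨i, Nat.lt_succ_of_lt h⟩) (σ ⟨i + 1, Nat.succ_lt_succ h⟩)) ∧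
        (∀ i : ℕ, 1 ≤ i → (h : i ≤ k) →
          H.Adj (σ ⟨i, Nat.lt_succ_of_lt (Nat.lt_succ_of_le h)⟩) (γ i)) ∧
        σ 0 = γ 1 ∧ σ ⟨k + 1, Nat.lt_succ_self (k + 1)⟩ = γ k} := by
  ext σ
  simp only [mem_coe, mem_pinnedWalks, Set.mem_ofPred_eq]
  refine ⟨fun ⟨hadj, hA, hlast⟩ =>
      ⟨fun i hi => hadj ⟨i, hi⟩, fun i hi hik => ?_, ?_, hlast⟩,
    fun ⟨hadj, hpin, h0, hlast⟩ => ⟨fun j => hadj j j.isLt, fun j => ?_, hlast⟩⟩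
  · simpa [gadgetPins_of_le γ hi hik, adj_comm] using hA ⟨i, by omega⟩
  · simpa [gadgetPins_zero] using hA 0
  · rcases Nat.eq_zero_or_pos j with hj | hj
    · simp [show j = 0 from Fin.ext hj, gadgetPins_zero, h0]
    · rcases le_or_gt (j : ℕ) k with hjk | hjk
      · simpa [gadgetPins_of_le γ hj hjk, adj_comm] using hpin j hj hjk
      · simp [gadgetPins_of_lt γ hjk]

lemma card_pinnedWalks_gadgetPins_cast {p k : ℕ} {γ : ℕ → V}
    (hsf : ∀ a b c d : V, a ≠ b → b ≠ c → c ≠ d → d ≠ a → a ≠ c → b ≠ d →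
      ¬(H.Adj a b ∧ H.Adj b c ∧ H.Adj c d ∧ H.Adj d a))
    (hwalk : ∀ i < k, H.Adj (γ i) (γ (i + 1)))
    (hdeg : ∀ i, 1 ≤ i → i ≤ k → (H.degree (γ i) : ZMod p) = 1)
    {n : ℕ} (hn : 1 ≤ n) (hnk : n ≤ k) (x : V) :
    (#(H.pinnedWalks (H.gadgetPins γ k) n x) : ZMod p) = if H.Adj x (γ n) then 1 else 0 := by
  induction n, hn using Nat.le_induction generalizing x with
  | base =>
    simp only [card_pinnedWalks_succ, card_pinnedWalks_zero, gadgetPins_zero,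
      gadgetPins_of_le γ le_rfl hnk, mem_neighborFinset, mem_singleton, sum_ite_eq', adj_comm]
    split_ifs <;> simp
  | succ n hn ih =>
    simp only [card_pinnedWalks_succ, gadgetPins_of_le γ (by omega : 1 ≤ n + 1) hnk,
      mem_neighborFinset, adj_comm]
    split_ifs with hx
    · push_cast
      rw [sum_congr rfl fun z _ => ih (by omega) z, sum_neighborFinset_ite_adj]
      by_cases hxn : x = γ n
      · rw [hxn, inter_self, card_neighborFinset_eq_degree, hdeg n hn (by omega)]
      · rw [neighborFinset_inter_eq_singleton hsf hxn hx (hwalk n (by omega)), card_singleton,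
          Nat.cast_one]
    · exact Nat.cast_zero

end SimpleGraph

/-- For the edge gadget built on a cycle `θ γ₁ … γ_k θ` (length ≥ 3, `θ = γ 0`) in a
square-free graph, with `deg(γ_i) ≡ 1 (mod p)` for all `i ∈ [k]`, the number of homomorphisms
with `σ(s) = γ₁` and `σ(t) = γ_k` is congruent to 1 modulo `p`. -/
theorem stmt11 {V : Type*} [Fintype V] [DecidableEq V]
    (H : SimpleGraph V) [DecidableRel H.Adj]
    (p : ℕ)
    (hsf : ∀ a b c d : V, a ≠ b → b ≠ c → c ≠ d → d ≠ a → a ≠ c → b ≠ d →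
      ¬(H.Adj a b ∧ H.Adj b c ∧ H.Adj c d ∧ H.Adj d a))
    (k : ℕ) (hk : 2 ≤ k)
    (γ : ℕ → V)
    (hwalk : ∀ i < k, H.Adj (γ i) (γ (i + 1)))
    (hdeg : ∀ i, 1 ≤ i → i ≤ k → (H.degree (γ i) : ZMod p) = 1) :
    (Set.ncard {σ : Fin (k + 2) → V |
      (∀ i : ℕ, (h : i < k + 1) →
        H.Adj (σ ⟨i, by omega⟩) (σ ⟨i + 1, by omega⟩)) ∧
      (∀ i : ℕ, 1 ≤ i → (h : i ≤ k) → H.Adj (σ ⟨i, by omega⟩) (γ i)) ∧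
      σ 0 = γ 1 ∧ σ ⟨k + 1, by omega⟩ = γ k} : ZMod p) = 1 := by
  rw [← coe_pinnedWalks_gadgetPins, Set.ncard_coe_finset, card_pinnedWalks_succ,
    if_pos (by simp [gadgetPins_of_lt γ (Nat.lt_succ_self k)]), Nat.cast_sum,
    sum_congr rfl fun z _ => card_pinnedWalks_gadgetPins_cast hsf hwalk hdeg (by omega) le_rfl z,
    sum_neighborFinset_ite_adj, inter_self, card_neighborFinset_eq_degree]
  exact hdeg k (by omega) le_rfl
end
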